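/- Identification of the bounded locus of a conormal component under the induced cotangent ℂ×-action (the free case of the paper's Lemma on the m-bounded locus of the hypertoric skeleton): Let m : Fin n → ℤ be an integer cocharacter and let α : Fin n → Bool be a sign vector. Consider the conormal component L^α = {(x, ξ) ∈ ℂⁿ × ℂⁿ | x i = 0 for every i with α i = false, and ξ i = 0 for every i with α i = true}, with a nonzero complex number λ acting by λ · (x, ξ) = ((λ^{m i} · x i)_i, (λ^{−(m i)} · ξ i)_i). Then the following are equivalent: (a) every point (x, ξ) ∈ L^α is m-bounded, i.e. the limit of λ · (x, ξ) exists as ‖λ‖ → ∞; (b) m i ≤ 0 for every i with α i = true and m i ≥ 0 for every i with α i = false; (c) the linear functional y ↦ Σᵢ (m i) · (y i) on ℝⁿ is bounded above on the closed orthant O_α. -/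

import Mathlib

open Filter

/-- The filter on nonzero complex numbers (units of `ℂ`) of going to infinity,
obtained by pulling back the `atTop` filter under the norm. -/
noncomputable def unitsAtInfty : Filter ℂˣ :=
  Filter.comap (fun z : ℂˣ => ‖(z : ℂ)‖) Filter.atTop

/-- The closed orthant associated to a sign vector `α : Fin n → Bool`. -/
def orthant {n : ℕ} (α : Fin n → Bool) : Set (EuclideanSpace ℝ (Fin n)) :=
  {y | ∀ i, (α i = true → 0 ≤ y i) ∧ (α i = false → y i ≤ 0)}

/-- The conormal component `L^α ⊆ T*ℂⁿ = ℂⁿ × ℂⁿ` to the coordinate subspace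
`X^α = {x | x i = 0 for i with α i = false}`. -/
def conormalComponent {n : ℕ} (α : Fin n → Bool) :
    Set ((Fin n → ℂ) × (Fin n → ℂ)) :=
  {p | (∀ i, α i = false → p.1 i = 0) ∧ (∀ i, α i = true → p.2 i = 0)}

/-- The `ℂˣ`-action on `T*ℂⁿ` induced by the cocharacter `m`, acting with weight `m i`
on the base coordinate `x i` and weight `-(m i)` on the fiber coordinate `ξ i`. -/
noncomputable def cotangentAction {n : ℕ} (m : Fin n → ℤ) (z : ℂˣ)
    (p : (Fin n → ℂ) × (Fin n → ℂ)) : (Fin n → ℂ) × (Fin n → ℂ) :=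
  (fun i => (z : ℂ) ^ (m i) * p.1 i, fun i => (z : ℂ) ^ (-(m i)) * p.2 i)

/-- A point `p` of `T*ℂⁿ` is `m`-bounded if `z • p` converges as `‖z‖ → ∞`. -/
def IsMBounded {n : ℕ} (m : Fin n → ℤ) (p : (Fin n → ℂ) × (Fin n → ℂ)) : Prop :=
  ∃ L : (Fin n → ℂ) × (Fin n → ℂ),
    Tendsto (fun z : ℂˣ => cotangentAction m z p) unitsAtInfty (nhds L)

/-!
The action is diagonal, so a point is bounded iff every nonzero coordinate has nonpositive
weight; the generic point of `L^α`, all of whose unconstrained coordinates are nonzero, tests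
all the weights at once. On the other side, a positively homogeneous functional is bounded
above on a cone iff it is nonpositive there, and on the orthant this is tested on the
coordinate rays.
-/

open Topology

lemma tendsto_norm_unitsAtInfty :
    Tendsto (fun z : ℂˣ => ‖(z : ℂ)‖) unitsAtInfty atTop :=
  tendsto_comap

instance unitsAtInfty_neBot : unitsAtInfty.NeBot := by
  refine atTop_neBot.comap_of_range_mem (mem_of_superset (Ioi_mem_atTop 0) fun r hr => ?_)
  exact ⟨Units.mk0 (r : ℂ) (by exact_mod_cast (ne_of_gt hr)),
    by simp [abs_of_pos (show (0 : ℝ) < r from hr)]⟩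

lemma tendsto_zpow_unitsAtInfty_zero {k : ℤ} (hk : k < 0) :
    Tendsto (fun z : ℂˣ => (z : ℂ) ^ k) unitsAtInfty (𝓝 0) := by
  rw [tendsto_zero_iff_norm_tendsto_zero]
  simpa only [norm_zpow, Function.comp_def] using
    (tendsto_zpow_atTop_zero hk).comp tendsto_norm_unitsAtInfty

lemma tendsto_norm_zpow_mul_unitsAtInfty_atTop {k : ℤ} (hk : 0 < k) {c : ℂ} (hc : c ≠ 0) :
    Tendsto (fun z : ℂˣ => ‖(z : ℂ) ^ k * c‖) unitsAtInfty atTop := by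
  simpa only [norm_mul, norm_zpow, Function.comp_def] using
    ((tendsto_zpow_atTop_atTop hk).atTop_mul_const (norm_pos_iff.mpr hc)).comp
      tendsto_norm_unitsAtInfty

lemma exists_tendsto_zpow_mul_unitsAtInfty_iff (k : ℤ) (c : ℂ) :
    (∃ L, Tendsto (fun z : ℂˣ => (z : ℂ) ^ k * c) unitsAtInfty (𝓝 L)) ↔ k ≤ 0 ∨ c = 0 := by
  constructor
  · rintro ⟨L, hL⟩
    by_contra! h
    exact not_tendsto_nhds_of_tendsto_atTop
      (tendsto_norm_zpow_mul_unitsAtInfty_atTop h.1 h.2) ‖L‖ hL.norm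
  · rintro (hk | rfl)
    · rcases hk.lt_or_eq with hk | rfl
      · exact ⟨0, by simpa using (tendsto_zpow_unitsAtInfty_zero hk).mul_const c⟩
      · exact ⟨c, by simp⟩
    · exact ⟨0, by simp⟩

lemma exists_tendsto_pi_nhds_iff {Y ι : Type*} {A : ι → Type*} [∀ i, TopologicalSpace (A i)]
    {f : Y → ∀ i, A i} {u : Filter Y} :
    (∃ g, Tendsto f u (𝓝 g)) ↔ ∀ i, ∃ L, Tendsto (fun y => f y i) u (𝓝 L) := by
  simp only [tendsto_pi_nhds]
  exact (Classical.skolem (p := fun i L => Tendsto (fun y => f y i) u (𝓝 L))).symm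

lemma isMBounded_iff {n : ℕ} (m : Fin n → ℤ) (p : (Fin n → ℂ) × (Fin n → ℂ)) :
    IsMBounded m p ↔ ∀ i, (m i ≤ 0 ∨ p.1 i = 0) ∧ (0 ≤ m i ∨ p.2 i = 0) := by
  simp only [IsMBounded, cotangentAction, Prod.exists, nhds_prod_eq, tendsto_prod_iff',
    exists_and_left, exists_and_right, exists_tendsto_pi_nhds_iff,
    exists_tendsto_zpow_mul_unitsAtInfty_iff, neg_nonpos, forall_and]

lemma forall_isMBounded_conormalComponent_iff {n : ℕ} (m : Fin n → ℤ) (α : Fin n → Bool) :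
    (∀ p ∈ conormalComponent α, IsMBounded m p) ↔
      ∀ i, (α i = true → m i ≤ 0) ∧ (α i = false → 0 ≤ m i) := by
  simp only [isMBounded_iff]
  constructor
  · -- the generic point of `L^α`: every coordinate not forced to vanish equals `1`
    intro h i
    have := h (fun j => if α j then 1 else 0, fun j => if α j then 0 else 1)
      ⟨fun j hj => by simp [hj], fun j hj => by simp [hj]⟩ i
    cases hi : α i <;> simp_all
  · rintro h ⟨x, ξ⟩ ⟨hx, hξ⟩ i
    cases hi : α i
    · exact ⟨Or.inr (hx i hi), Or.inl ((h i).2 hi)⟩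
    · exact ⟨Or.inl ((h i).1 hi), Or.inr (hξ i hi)⟩

lemma bddAbove_image_iff_forall_nonpos {E : Type*} [AddCommMonoid E] [Module ℝ E]
    {f : E → ℝ} {s : Set E} (hs : ∀ y ∈ s, ∀ t : ℝ, 0 ≤ t → t • y ∈ s)
    (hf : ∀ y, ∀ t : ℝ, 0 ≤ t → f (t • y) = t * f y) :
    BddAbove (f '' s) ↔ ∀ y ∈ s, f y ≤ 0 := by
  refine ⟨fun ⟨b, hb⟩ y hy => ?_, fun h => ⟨0, Set.forall_mem_image.2 h⟩⟩
  by_contra! hpos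
  have hfb : f y ≤ b := hb ⟨y, hy, rfl⟩
  have ht : 0 ≤ (b + 1) / f y := div_nonneg (by linarith) hpos.le
  have : f (((b + 1) / f y) • y) ≤ b := hb ⟨_, hs y hy _ ht, rfl⟩
  rw [hf y _ ht, div_mul_cancel₀ _ hpos.ne'] at this
  linarith

lemma smul_mem_orthant {n : ℕ} {α : Fin n → Bool} {y : EuclideanSpace ℝ (Fin n)}
    (hy : y ∈ orthant α) {t : ℝ} (ht : 0 ≤ t) : t • y ∈ orthant α := fun i =>
  ⟨fun hi => by simpa using mul_nonneg ht ((hy i).1 hi),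
    fun hi => by simpa using mul_nonpos_of_nonneg_of_nonpos ht ((hy i).2 hi)⟩

lemma forall_sum_mul_nonpos_on_orthant_iff {n : ℕ} (c : Fin n → ℝ) (α : Fin n → Bool) :
    (∀ y ∈ orthant α, ∑ i, c i * y i ≤ 0) ↔
      ∀ i, (α i = true → c i ≤ 0) ∧ (α i = false → 0 ≤ c i) := by
  constructor
  · intro h i
    have := h (EuclideanSpace.single i (if α i then 1 else -1)) fun j => by
      by_cases hj : j = i <;> cases hα : α i <;> simp_all
    cases hα : α i <;> simp_all [PiLp.single_apply]
  · intro h y hy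
    refine Finset.sum_nonpos fun i _ => ?_
    cases hi : α i
    · exact mul_nonpos_of_nonneg_of_nonpos ((h i).2 hi) ((hy i).2 hi)
    · exact mul_nonpos_of_nonpos_of_nonneg ((h i).1 hi) ((hy i).1 hi)

/-- Identification of the bounded locus of a conormal component under the induced
cotangent `ℂˣ`-action: every point of `L^α` is `m`-bounded iff `m i ≤ 0` for `i` with
`α i = true` and `0 ≤ m i` for `i` with `α i = false`, iff the functional
`y ↦ ∑ i, m i * y i` is bounded above on the closed orthant `O_α`. -/
theorem bounded_locus_conormal_component {n : ℕ} (m : Fin n → ℤ) (α : Fin n → Bool) :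
    ((∀ p ∈ conormalComponent α, IsMBounded m p) ↔
      ∀ i, (α i = true → m i ≤ 0) ∧ (α i = false → 0 ≤ m i)) ∧
    ((∀ i, (α i = true → m i ≤ 0) ∧ (α i = false → 0 ≤ m i)) ↔
      BddAbove ((fun y : EuclideanSpace ℝ (Fin n) => ∑ i, (m i : ℝ) * y i) ''
        orthant α)) := by
  refine ⟨forall_isMBounded_conormalComponent_iff m α, ?_⟩
  have homogeneous (y : EuclideanSpace ℝ (Fin n)) (t : ℝ) (_ : 0 ≤ t) :
      ∑ i, (m i : ℝ) * (t • y) i = t * ∑ i, (m i : ℝ) * y i := by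
    simp only [PiLp.smul_apply, smul_eq_mul, Finset.mul_sum]
    exact Finset.sum_congr rfl fun i _ => by ring
  rw [bddAbove_image_iff_forall_nonpos (fun y hy t ht => smul_mem_orthant hy ht) homogeneous,
    forall_sum_mul_nonpos_on_orthant_iff]
  simp only [Int.cast_nonpos, Int.cast_nonneg_iff]
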